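/- arXiv:1912.00723 — 3 statements merged into one kernel-verified Lean document; each statement's English description precedes it below -/
import Mathlib

section
/- In the IRL1 setting, for every k ∈ ℕ, F(x^k, ε^k) − F(x^{k+1}, ε^{k+1}) ≥ [G(x^k; x^k, ε^k) − G(x^{k+1}; x^k, ε^k)] + ((M − L_f)/2)·‖x^k − x^{k+1}‖². -/
open Filter Topology

/-- The weight function `w(t, s) = p(|t| + s)^(p-1)`. -/
noncomputable def wfun (p t s : ℝ) : ℝ := p * (|t| + s) ^ (p - 1)

/-- The IRL1 setting (Algorithm 2.1 of the paper): fixed data `p ∈ (0,1)`, `λ > 0`,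
`μ ∈ (0,1)`, a differentiable `f` with `Lf`-Lipschitz gradient (`Lf ≥ 0`), iterates
`x^k`, positive parameters `ε^k` with `ε^{k+1} ≤ μ ε^k` componentwise, and for each `k`
a differentiable model `Q_k` with `∇Q_k(x^k) = ∇f(x^k)`, `M`-strongly convex with
`M > Lf/2` (strong convexity meaning `z ↦ Q_k z - (M/2)‖z‖²` is convex), `∇Q_k`
`L`-Lipschitz, such that `x^{k+1}` is a global minimizer of
`G(·; x^k, ε^k) = Q_k(·) + λ Σᵢ w(xᵢ^k, εᵢ^k)|·ᵢ|`. -/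
structure IRL1 (n : ℕ) where
  p : ℝ
  lam : ℝ
  mu : ℝ
  Lf : ℝ
  M : ℝ
  L : ℝ
  f : EuclideanSpace ℝ (Fin n) → ℝ
  x : ℕ → EuclideanSpace ℝ (Fin n)
  eps : ℕ → Fin n → ℝ
  Q : ℕ → EuclideanSpace ℝ (Fin n) → ℝ
  hp0 : 0 < p
  hp1 : p < 1
  hlam : 0 < lam
  hmu0 : 0 < mu
  hmu1 : mu < 1
  hLf : 0 ≤ Lf
  hM : Lf / 2 < M
  hf_diff : Differentiable ℝ f
  hf_lip : ∀ a b, ‖gradient f a - gradient f b‖ ≤ Lf * ‖a - b‖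
  heps_pos : ∀ k i, 0 < eps k i
  heps_dec : ∀ k i, eps (k + 1) i ≤ mu * eps k i
  hQ_diff : ∀ k, Differentiable ℝ (Q k)
  hQ_grad : ∀ k, gradient (Q k) (x k) = gradient f (x k)
  hQ_sconv : ∀ k, ConvexOn ℝ Set.univ (fun z => Q k z - M / 2 * ‖z‖ ^ 2)
  hQ_lip : ∀ k a b, ‖gradient (Q k) a - gradient (Q k) b‖ ≤ L * ‖a - b‖
  hmin : ∀ k, ∀ z : EuclideanSpace ℝ (Fin n),
    Q k (x (k + 1)) + lam * ∑ i, wfun p (x k i) (eps k i) * |x (k + 1) i|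
      ≤ Q k z + lam * ∑ i, wfun p (x k i) (eps k i) * |z i|

/-- The smoothed objective `F(x, ε) = f(x) + λ Σᵢ (|xᵢ| + εᵢ)^p`. -/
noncomputable def IRL1.Feps {n : ℕ} (S : IRL1 n)
    (z : EuclideanSpace ℝ (Fin n)) (e : Fin n → ℝ) : ℝ :=
  S.f z + S.lam * ∑ i, (|z i| + e i) ^ S.p

/-- The objective `F(x) = f(x) + λ Σᵢ |xᵢ|^p`. -/
noncomputable def IRL1.Fobj {n : ℕ} (S : IRL1 n) (z : EuclideanSpace ℝ (Fin n)) : ℝ :=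
  S.f z + S.lam * ∑ i, |z i| ^ S.p

/-- The subproblem objective `G(z; x^k, ε^k)`. -/
noncomputable def IRL1.G {n : ℕ} (S : IRL1 n) (k : ℕ)
    (z : EuclideanSpace ℝ (Fin n)) : ℝ :=
  S.Q k z + S.lam * ∑ i, wfun S.p (S.x k i) (S.eps k i) * |z i|

/-- The level set `{x : F(x) ≤ F(x⁰, ε⁰)}` is bounded. -/
def IRL1.LevelBounded {n : ℕ} (S : IRL1 n) : Prop :=
  Bornology.IsBounded {z : EuclideanSpace ℝ (Fin n) | S.Fobj z ≤ S.Feps (S.x 0) (S.eps 0)}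

/-!
The smooth and the nonsmooth parts of `F` are compared separately with those of `G(·; x^k, ε^k)`.
Smooth part: the descent lemma for `f` and strong convexity of `Q_k`, whose gradients agree at
`x^k`, give `f(x^k) - f(x^{k+1}) ≥ Q_k(x^k) - Q_k(x^{k+1}) + (M - L_f)/2 ‖x^k - x^{k+1}‖²`.
Nonsmooth part: `w(x_i^k, ε_i^k)` is the slope of the tangent to the concave map `u ↦ u^p` at
`|x_i^k| + ε_i^k`, so `w(x_i^k, ε_i^k)(|x_i^k| - |x_i^{k+1}|)` is at most
`(|x_i^k| + ε_i^k)^p - (|x_i^{k+1}| + ε_i^k)^p`, and `ε^{k+1} ≤ ε^k` only increases this bound.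
-/

section InnerProductSpace

variable {E : Type*} [NormedAddCommGroup E] [InnerProductSpace ℝ E]

local notation "⟪" x ", " y "⟫" => @inner ℝ _ _ x y

theorem ConvexOn.add_fderiv_le {s : Set E} {g : E → ℝ} {g' : E →L[ℝ] ℝ} {x y : E}
    (hg : ConvexOn ℝ s g) (hx : x ∈ s) (hy : y ∈ s) (hd : HasFDerivAt g g' x) :
    g x + g' (y - x) ≤ g y := by
  have hline : HasDerivAt (g ∘ AffineMap.lineMap (k := ℝ) x y) (g' (y - x)) 0 :=
    hd.comp_hasDerivAt_of_eq 0 AffineMap.hasDerivAt_lineMap (by simp)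
  have h := (hg.comp_affineMap (AffineMap.lineMap x y)).le_slope_of_hasDerivAt
    (by simpa using hx) (by simpa using hy) one_pos hline
  simp only [slope, sub_zero, inv_one, Function.comp_apply, AffineMap.lineMap_apply_one,
    AffineMap.lineMap_apply_zero, vsub_eq_sub, smul_eq_mul, one_mul] at h
  linarith

variable [CompleteSpace E]

theorem StrongConvexOn.add_inner_gradient_add_le {s : Set E} {m : ℝ} {Q : E → ℝ} {x y : E}
    (hQ : StrongConvexOn s m Q) (hx : x ∈ s) (hy : y ∈ s) (hd : DifferentiableAt ℝ Q x) :
    Q x + ⟪gradient Q x, y - x⟫ + m / 2 * ‖y - x‖ ^ 2 ≤ Q y := by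
  have h := (strongConvexOn_iff_convex.mp hQ).add_fderiv_le hx hy
    (hd.hasFDerivAt.sub ((hasStrictFDerivAt_norm_sq x).hasFDerivAt.const_mul (m / 2)))
  have hnorm : ‖y‖ ^ 2 = ‖x‖ ^ 2 + 2 * ⟪x, y - x⟫ + ‖y - x‖ ^ 2 := by
    simpa using norm_add_sq_real x (y - x)
  simp only [sub_apply, smul_apply, nsmul_eq_mul, Nat.cast_ofNat, smul_eq_mul,
    innerSL_apply_apply, ← inner_gradient_left] at h
  rw [hnorm] at h
  linarith

theorem hasDerivAt_apply_add_smul {f : E → ℝ} {x v : E} {t : ℝ}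
    (hf : DifferentiableAt ℝ f (x + t • v)) :
    HasDerivAt (fun s : ℝ => f (x + s • v)) ⟪gradient f (x + t • v), v⟫ t := by
  have hline : HasDerivAt (fun s : ℝ => x + s • v) v t :=
    ((hasDerivAt_id t).smul_const v).const_add x |>.congr_deriv (one_smul ℝ v)
  rw [inner_gradient_left]
  exact hf.hasFDerivAt.comp_hasDerivAt t hline

theorem le_add_inner_gradient_add_of_lipschitz_gradient {f : E → ℝ} {L : ℝ}
    (hf : Differentiable ℝ f) (hlip : ∀ a b, ‖gradient f a - gradient f b‖ ≤ L * ‖a - b‖)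
    (x y : E) : f y ≤ f x + ⟪gradient f x, y - x⟫ + L / 2 * ‖y - x‖ ^ 2 := by
  set v := y - x
  set k : ℝ → ℝ := fun t => f (x + t • v) - t * ⟪gradient f x, v⟫ - L / 2 * ‖v‖ ^ 2 * t ^ 2
  have hk : ∀ t,
      HasDerivAt k (⟪gradient f (x + t • v) - gradient f x, v⟫ - L * ‖v‖ ^ 2 * t) t := by
    intro t
    have := ((hasDerivAt_apply_add_smul (hf (x + t • v))).sub ((hasDerivAt_id t).mul_const
      ⟪gradient f x, v⟫)).sub ((hasDerivAt_pow 2 t).const_mul (L / 2 * ‖v‖ ^ 2))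
    exact this.congr_deriv (by rw [inner_sub_left]; simp only [one_mul]; ring)
  have hk_deriv : ∀ t ∈ interior (Set.Icc (0 : ℝ) 1), deriv k t ≤ 0 := by
    rw [interior_Icc]
    rintro t ⟨ht, -⟩
    rw [(hk t).deriv, sub_nonpos]
    calc ⟪gradient f (x + t • v) - gradient f x, v⟫
        ≤ ‖gradient f (x + t • v) - gradient f x‖ * ‖v‖ := real_inner_le_norm _ _
      _ ≤ L * ‖(x + t • v) - x‖ * ‖v‖ := by gcongr; exact hlip _ _
      _ = L * ‖v‖ ^ 2 * t := by
        rw [add_sub_cancel_left, norm_smul, Real.norm_of_nonneg ht.le]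
        ring
  have hk_anti := antitoneOn_of_deriv_nonpos (convex_Icc 0 1)
    (continuous_iff_continuousAt.2 fun t => (hk t).continuousAt).continuousOn
    (fun t _ => (hk t).differentiableAt.differentiableWithinAt) hk_deriv
  have h := hk_anti (Set.left_mem_Icc.2 zero_le_one) (Set.right_mem_Icc.2 zero_le_one) zero_le_one
  have hk0 : k 0 = f x := by simp [k]
  have hk1 : k 1 = f y - ⟪gradient f x, v⟫ - L / 2 * ‖v‖ ^ 2 := by simp [k, v]
  linarith

end InnerProductSpace

theorem Real.rpow_le_rpow_add_mul_sub {p a b : ℝ} (hp0 : 0 ≤ p) (hp1 : p ≤ 1) (ha : 0 < a)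
    (hb : 0 ≤ b) : b ^ p ≤ a ^ p + p * a ^ (p - 1) * (b - a) := by
  have hbern := rpow_one_add_le_one_add_mul_self (s := b / a - 1)
    (by linarith [div_nonneg hb ha.le]) hp0 hp1
  rw [add_sub_cancel, Real.div_rpow hb ha.le, div_le_iff₀ (by positivity)] at hbern
  calc b ^ p ≤ (1 + p * (b / a - 1)) * a ^ p := hbern
    _ = a ^ p + p * a ^ (p - 1) * (b - a) := by
      rw [Real.rpow_sub_one ha.ne']
      field_simp

theorem wfun_mul_abs_sub_abs_le {p t s e e' : ℝ} (hp0 : 0 ≤ p) (hp1 : p ≤ 1) (he : 0 < e)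
    (he' : 0 ≤ e') (hee' : e' ≤ e) :
    wfun p t e * (|t| - |s|) ≤ (|t| + e) ^ p - (|s| + e') ^ p := by
  have hmono : (|s| + e') ^ p ≤ (|s| + e) ^ p :=
    Real.rpow_le_rpow (by positivity) (by linarith) hp0
  have htangent := Real.rpow_le_rpow_add_mul_sub (a := |t| + e) (b := |s| + e) hp0 hp1
    (by positivity) (by positivity)
  rw [wfun]
  linarith

namespace IRL1

variable {n : ℕ} (S : IRL1 n)

theorem eps_succ_le (k : ℕ) (i : Fin n) : S.eps (k + 1) i ≤ S.eps k i :=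
  (S.heps_dec k i).trans (mul_le_of_le_one_left (S.heps_pos k i).le S.hmu1.le)

theorem Q_sub_Q_add_le_f_sub_f (k : ℕ) :
    S.Q k (S.x k) - S.Q k (S.x (k + 1)) + (S.M - S.Lf) / 2 * ‖S.x k - S.x (k + 1)‖ ^ 2
      ≤ S.f (S.x k) - S.f (S.x (k + 1)) := by
  have hdescent := le_add_inner_gradient_add_of_lipschitz_gradient S.hf_diff S.hf_lip
    (S.x k) (S.x (k + 1))
  have hstrong := (strongConvexOn_iff_convex.mpr (S.hQ_sconv k)).add_inner_gradient_add_le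
    (Set.mem_univ (S.x k)) (Set.mem_univ (S.x (k + 1))) (S.hQ_diff k (S.x k))
  rw [S.hQ_grad k] at hstrong
  rw [norm_sub_rev]
  linarith

theorem weighted_sum_sub_le_smoothed_sum_sub (k : ℕ) :
    ∑ i, wfun S.p (S.x k i) (S.eps k i) * |S.x k i|
        - ∑ i, wfun S.p (S.x k i) (S.eps k i) * |S.x (k + 1) i|
      ≤ ∑ i, (|S.x k i| + S.eps k i) ^ S.p - ∑ i, (|S.x (k + 1) i| + S.eps (k + 1) i) ^ S.p := by
  rw [← Finset.sum_sub_distrib, ← Finset.sum_sub_distrib]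
  refine Finset.sum_le_sum fun i _ => ?_
  rw [← mul_sub]
  exact wfun_mul_abs_sub_abs_le S.hp0.le S.hp1.le (S.heps_pos k i) (S.heps_pos (k + 1) i).le
    (S.eps_succ_le k i)

end IRL1

/-- In the IRL1 setting, for every `k`,
`F(x^k, ε^k) - F(x^{k+1}, ε^{k+1}) ≥ [G(x^k; x^k, ε^k) - G(x^{k+1}; x^k, ε^k)] + ((M - Lf)/2)‖x^k - x^{k+1}‖²`. -/
theorem stmt3 {n : ℕ} (S : IRL1 n) (k : ℕ) :
    S.Feps (S.x k) (S.eps k) - S.Feps (S.x (k + 1)) (S.eps (k + 1)) ≥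
      (S.G k (S.x k) - S.G k (S.x (k + 1))) +
        (S.M - S.Lf) / 2 * ‖S.x k - S.x (k + 1)‖ ^ 2 := by
  have hsmooth := S.Q_sub_Q_add_le_f_sub_f k
  have hpenalty := mul_le_mul_of_nonneg_left (S.weighted_sum_sub_le_smoothed_sum_sub k) S.hlam.le
  simp only [IRL1.Feps, IRL1.G, ge_iff_le]
  linarith
end

section
/- In the IRL1 setting with level-set boundedness, let C > 0 satisfy ‖∇Q_k(x^{k+1})‖_∞ ≤ C for all k. Fix a coordinate i. (a) If w(x_i^{k̃}, ε_i^{k̃}) > C/λ for some k̃ ∈ ℕ, then x_i^k = 0 for all k > k̃. (b) Consequently, if for every k̃ ∈ ℕ there exists k̂ > k̃ with x_i^{k̂} ≠ 0, then w(x_i^k, ε_i^k) ≤ C/λ for all k ∈ ℕ. -/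
/-!
At a coordinate where the minimizer `x^{k+1}` of the subproblem is nonzero, the weighted
`ℓ¹` term is differentiable, so first-order optimality gives
`λ w(x_i^k, ε_i^k) = |∂_i Q_k(x^{k+1})| ≤ C`.
Hence a weight above `C/λ` forces `x_i^{k+1} = 0`; the next weight is then `p (ε_i^{k+1})^{p-1}`,
which is at least the previous one because `ε_i^{k+1} ≤ |x_i^k| + ε_i^k` and `p - 1 < 0`.
So the weight stays above `C/λ` and the coordinate stays zero forever.
-/

open Filter Topology

theorem abs_eq_of_hasDerivAt_of_forall_add_mul_abs_le {φ : ℝ → ℝ} {d c t : ℝ}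
    (hφ : HasDerivAt φ d t) (ht : t ≠ 0) (hmin : ∀ σ, φ t + c * |t| ≤ φ σ + c * |σ|) :
    |d| = |c| := by
  have hcrit : d + c * SignType.sign t = 0 :=
    IsLocalMin.hasDerivAt_eq_zero (Eventually.of_forall hmin)
      (hφ.add ((hasDerivAt_abs ht).const_mul c))
  have hsign : |(SignType.sign t : ℝ)| = 1 := by
    rcases ht.lt_or_gt with h | h <;> simp [h]
  rw [eq_neg_of_add_eq_zero_left hcrit, abs_neg, abs_mul, hsign, mul_one]

theorem EuclideanSpace.hasDerivAt_add_smul_single {n : ℕ} (x : EuclideanSpace ℝ (Fin n))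
    (i : Fin n) (s : ℝ) :
    HasDerivAt (fun σ : ℝ => x + (σ - s) • EuclideanSpace.single i (1 : ℝ))
      (EuclideanSpace.single i 1) s := by
  simpa using (((hasDerivAt_id s).sub_const s).smul_const
    (EuclideanSpace.single i (1 : ℝ))).const_add x

theorem abs_gradient_apply_eq_of_isMin_add_weighted_abs {n : ℕ}
    {Q : EuclideanSpace ℝ (Fin n) → ℝ} {x : EuclideanSpace ℝ (Fin n)} {lam : ℝ}
    {w : Fin n → ℝ} (hQ : DifferentiableAt ℝ Q x)
    (hmin : ∀ z, Q x + lam * ∑ j, w j * |x j| ≤ Q z + lam * ∑ j, w j * |z j|)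
    {i : Fin n} (hi : x i ≠ 0) :
    |gradient Q x i| = |lam * w i| := by
  set line := fun σ : ℝ => x + (σ - x i) • EuclideanSpace.single i (1 : ℝ)
  have hline_apply : ∀ σ j, line σ j = if j = i then σ else x j := by
    intro σ j
    by_cases hj : j = i <;> simp [line, hj]
  have hsum : ∀ σ,
      ∑ j, w j * |line σ j| = w i * |σ| + ∑ j ∈ Finset.univ.erase i, w j * |x j| := by
    intro σ
    rw [← Finset.add_sum_erase _ _ (Finset.mem_univ i), hline_apply, if_pos rfl]
    congr 1
    refine Finset.sum_congr rfl fun j hj => ?_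
    rw [hline_apply, if_neg (Finset.ne_of_mem_erase hj)]
  have hline_at : line (x i) = x := by simp [line]
  have hderiv : HasDerivAt (fun σ => Q (line σ)) (gradient Q x i) (x i) := by
    have hF : HasFDerivAt Q (InnerProductSpace.toDual ℝ _ (gradient Q x)) (line (x i)) := by
      rw [hline_at]; exact hQ.hasGradientAt.hasFDerivAt
    refine (hF.comp_hasDerivAt (x i)
      (EuclideanSpace.hasDerivAt_add_smul_single x i (x i))).congr_deriv ?_
    rw [InnerProductSpace.toDual_apply_apply, EuclideanSpace.inner_single_right]
    simp
  refine abs_eq_of_hasDerivAt_of_forall_add_mul_abs_le hderiv hi fun σ => ?_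
  have h := hmin (line σ)
  have hsum_at := hsum (x i)
  rw [hline_at] at hsum_at
  rw [hsum σ, hsum_at] at h
  rw [hline_at]
  linear_combination h

theorem wfun_pos {p t s : ℝ} (hp : 0 < p) (hs : 0 < s) : 0 < wfun p t s :=
  mul_pos hp (Real.rpow_pos_of_pos (by positivity) _)

theorem wfun_le_wfun_zero {p t s s' : ℝ} (hp0 : 0 ≤ p) (hp1 : p ≤ 1) (hs' : 0 < s')
    (h : s' ≤ |t| + s) : wfun p t s ≤ wfun p 0 s' := by
  unfold wfun
  rw [abs_zero, zero_add]
  exact mul_le_mul_of_nonneg_left (Real.rpow_le_rpow_of_nonpos hs' h (by linarith)) hp0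

namespace IRL1

variable {n : ℕ} (S : IRL1 n) {C : ℝ} {i : Fin n}

theorem lam_mul_wfun_eq_abs_gradient {k : ℕ} (hi : S.x (k + 1) i ≠ 0) :
    S.lam * wfun S.p (S.x k i) (S.eps k i) = |gradient (S.Q k) (S.x (k + 1)) i| := by
  rw [abs_gradient_apply_eq_of_isMin_add_weighted_abs (S.hQ_diff k _) (S.hmin k) hi,
    abs_of_pos (mul_pos S.hlam (wfun_pos S.hp0 (S.heps_pos k i)))]

theorem x_succ_eq_zero_of_div_lt_wfun {k : ℕ} (hC : |gradient (S.Q k) (S.x (k + 1)) i| ≤ C)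
    (hw : C / S.lam < wfun S.p (S.x k i) (S.eps k i)) : S.x (k + 1) i = 0 := by
  by_contra hi
  rw [div_lt_iff₀' S.hlam, S.lam_mul_wfun_eq_abs_gradient hi] at hw
  linarith

theorem wfun_le_wfun_succ_of_x_succ_eq_zero {k : ℕ} (h : S.x (k + 1) i = 0) :
    wfun S.p (S.x k i) (S.eps k i) ≤ wfun S.p (S.x (k + 1) i) (S.eps (k + 1) i) := by
  have heps : S.eps (k + 1) i ≤ S.eps k i :=
    (S.heps_dec k i).trans (mul_le_of_le_one_left (S.heps_pos k i).le S.hmu1.le)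
  rw [h]
  exact wfun_le_wfun_zero S.hp0.le S.hp1.le (S.heps_pos _ _)
    (by linarith [abs_nonneg (S.x k i)])

theorem div_lt_wfun_of_le (hCb : ∀ k, |gradient (S.Q k) (S.x (k + 1)) i| ≤ C) {kt : ℕ}
    (hw : C / S.lam < wfun S.p (S.x kt i) (S.eps kt i)) :
    ∀ k ≥ kt, C / S.lam < wfun S.p (S.x k i) (S.eps k i) :=
  Nat.le_induction hw fun k _ hk =>
    hk.trans_le <| S.wfun_le_wfun_succ_of_x_succ_eq_zero <|
      S.x_succ_eq_zero_of_div_lt_wfun (hCb k) hk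

theorem x_eq_zero_of_div_lt_wfun (hCb : ∀ k, |gradient (S.Q k) (S.x (k + 1)) i| ≤ C) {kt : ℕ}
    (hw : C / S.lam < wfun S.p (S.x kt i) (S.eps kt i)) {k : ℕ} (hk : kt < k) : S.x k i = 0 := by
  obtain ⟨m, rfl⟩ := Nat.exists_eq_add_of_lt hk
  exact S.x_succ_eq_zero_of_div_lt_wfun (hCb _) (S.div_lt_wfun_of_le hCb hw _ (by omega))

end IRL1

theorem stmt7_general {n : ℕ} (S : IRL1 n)
    (C : ℝ)
    (hCb : ∀ (k : ℕ) (j : Fin n), |gradient (S.Q k) (S.x (k + 1)) j| ≤ C)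
    (i : Fin n) :
    (∀ kt : ℕ, wfun S.p (S.x kt i) (S.eps kt i) > C / S.lam →
      ∀ k > kt, S.x k i = 0) ∧
    ((∀ kt : ℕ, ∃ kh > kt, S.x kh i ≠ 0) →
      ∀ k : ℕ, wfun S.p (S.x k i) (S.eps k i) ≤ C / S.lam) := by
  have hzero : ∀ kt : ℕ, wfun S.p (S.x kt i) (S.eps kt i) > C / S.lam →
      ∀ k > kt, S.x k i = 0 :=
    fun _ hw _ hk => S.x_eq_zero_of_div_lt_wfun (fun k => hCb k i) hw hk
  refine ⟨hzero, fun hinf k => ?_⟩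
  by_contra! hw
  obtain ⟨kh, hkh, hne⟩ := hinf k
  exact hne (hzero k hw kh hkh)

/-- In the IRL1 setting with bounded level set, let `C > 0` bound
`‖∇Q_k(x^{k+1})‖_∞` for all `k`, and fix a coordinate `i`.
(a) If `w(x_i^k̃, ε_i^k̃) > C/λ` for some `k̃`, then `x_i^k = 0` for all `k > k̃`.
(b) If for every `k̃` there is `k̂ > k̃` with `x_i^k̂ ≠ 0`, then
`w(x_i^k, ε_i^k) ≤ C/λ` for all `k`. -/
theorem stmt7 {n : ℕ} (S : IRL1 n) (hbdd : S.LevelBounded)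
    (C : ℝ) (hC : 0 < C)
    (hCb : ∀ (k : ℕ) (j : Fin n), |gradient (S.Q k) (S.x (k + 1)) j| ≤ C)
    (i : Fin n) :
    (∀ kt : ℕ, wfun S.p (S.x kt i) (S.eps kt i) > C / S.lam →
      ∀ k > kt, S.x k i = 0) ∧
    ((∀ kt : ℕ, ∃ kh > kt, S.x kh i ≠ 0) →
      ∀ k : ℕ, wfun S.p (S.x k i) (S.eps k i) ≤ C / S.lam) :=
  stmt7_general S C hCb i
end

section
/- In the IRL1 setting with level-set boundedness, let C > 0 satisfy ‖∇Q_k(x^{k+1})‖_∞ ≤ C for all k, and let I* be the eventual support of the iterates. Then every cluster point x* of the sequence {x^k} satisfies {i : x_i* ≠ 0} = I*, and |x_i*| ≥ (C/(pλ))^{1/(p−1)} for every i ∈ I*. -/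
open Filter Topology

/-! At a coordinate where the iterate `x^{k+1}` is nonzero the weighted `ℓ¹` term is
differentiable, so Fermat's rule for the subproblem gives `|∇ᵢQ_k(x^{k+1})| = λ w(xᵢ^k, εᵢ^k)`.
With `|∇ᵢQ_k| ≤ C` and `p - 1 < 0` this forces `|xᵢ^k| + εᵢ^k ≥ (C/(pλ))^(1/(p-1))` whenever
`i` lies in the eventual support. Since `εᵢ^k → 0` geometrically, the bound passes to every
cluster point, which also vanishes off the eventual support. -/

theorem gradient_apply_eq_of_isMin_add_weighted_l1 {n : ℕ}
    {g : EuclideanSpace ℝ (Fin n) → ℝ} {z : EuclideanSpace ℝ (Fin n)} {lam : ℝ}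
    {w : Fin n → ℝ} (hg : DifferentiableAt ℝ g z)
    (hmin : ∀ y, g z + lam * ∑ j, w j * |z j| ≤ g y + lam * ∑ j, w j * |y j|)
    {i : Fin n} (hzi : z i ≠ 0) :
    gradient g z i = -(lam * w i * SignType.sign (z i)) := by
  -- restrict to the line through `z` in direction `eᵢ`, where only `|zᵢ + t|` varies
  set line : ℝ → EuclideanSpace ℝ (Fin n) := fun t => z + t • EuclideanSpace.single i 1
  have hline_apply : ∀ t j, line t j = z j + if j = i then t else 0 := by
    intro t j; by_cases h : j = i <;> simp [line, h]
  have hsum : ∀ t, ∑ j, w j * |line t j| = ∑ j, w j * |z j| + w i * (|z i + t| - |z i|) := by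
    intro t
    rw [← sub_eq_iff_eq_add', ← Finset.sum_sub_distrib, Finset.sum_eq_single i]
    · simp only [hline_apply, ↓reduceIte]; ring
    · intro j _ hj; simp [hline_apply, hj]
    · simp
  have hderiv : HasDerivAt (fun t => g (line t) + lam * (w i * |z i + t|))
      (gradient g z i + lam * (w i * SignType.sign (z i))) 0 := by
    have hline : HasDerivAt line (EuclideanSpace.single i 1) 0 := by
      simpa only [id, one_smul] using
        ((hasDerivAt_id (0 : ℝ)).smul_const (EuclideanSpace.single i (1 : ℝ))).const_add z
    have hgz : HasFDerivAt g (InnerProductSpace.toDual ℝ _ (gradient g z)) (line 0) := by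
      simpa [line] using hg.hasGradientAt.hasFDerivAt
    have hQ : HasDerivAt (fun t => g (line t)) (gradient g z i) 0 := by
      simpa only [Function.comp_def, InnerProductSpace.toDual_apply_apply,
        EuclideanSpace.inner_single_right, one_mul, conj_trivial] using hgz.comp_hasDerivAt 0 hline
    have habs : HasDerivAt (fun t => |z i + t|) (SignType.sign (z i)) 0 := by
      have := (hasDerivAt_abs (by simpa using hzi)).comp (0 : ℝ)
        ((hasDerivAt_id (0 : ℝ)).const_add (z i))
      simpa [Function.comp_def] using this
    exact hQ.add ((habs.const_mul _).const_mul _)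
  have hlocmin : IsLocalMin (fun t => g (line t) + lam * (w i * |z i + t|)) 0 :=
    Eventually.of_forall fun t => by
      have := hmin (line t); rw [hsum] at this; simp only [line, zero_smul, add_zero]; linarith
  have := hlocmin.hasDerivAt_eq_zero hderiv
  linarith

namespace IRL1

variable {n : ℕ} (S : IRL1 n)

theorem abs_gradient_Q_eq (k : ℕ) {i : Fin n} (hi : S.x (k + 1) i ≠ 0) :
    |gradient (S.Q k) (S.x (k + 1)) i| = S.lam * wfun S.p (S.x k i) (S.eps k i) := by
  have hw : 0 < wfun S.p (S.x k i) (S.eps k i) := by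
    have := S.heps_pos k i; have := S.hp0; unfold wfun; positivity
  rw [gradient_apply_eq_of_isMin_add_weighted_l1 (S.hQ_diff k _) (S.hmin k) hi]
  rcases hi.lt_or_gt with h | h <;> simp [h, abs_of_pos S.hlam, abs_of_pos hw]

theorem rpow_le_abs_add_eps {k : ℕ} {i : Fin n} {C : ℝ}
    (hC : |gradient (S.Q k) (S.x (k + 1)) i| ≤ C) (hi : S.x (k + 1) i ≠ 0) :
    (C / (S.p * S.lam)) ^ (1 / (S.p - 1)) ≤ |S.x k i| + S.eps k i := by
  have hb : 0 < |S.x k i| + S.eps k i := by have := S.heps_pos k i; positivity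
  have hpl : 0 < S.p * S.lam := mul_pos S.hp0 S.hlam
  have hwC : (|S.x k i| + S.eps k i) ^ (S.p - 1) ≤ C / (S.p * S.lam) := by
    rw [le_div_iff₀ hpl]
    have := S.abs_gradient_Q_eq k hi
    unfold wfun at this
    linarith
  have hCpos : 0 < C / (S.p * S.lam) := (Real.rpow_pos_of_pos hb _).trans_le hwC
  rwa [one_div, Real.rpow_inv_le_iff_of_neg hCpos hb (by linarith [S.hp1])]

theorem eps_le_pow (k : ℕ) (i : Fin n) : S.eps k i ≤ S.mu ^ k * S.eps 0 i := by
  induction k with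
  | zero => simp
  | succ k ih =>
    calc S.eps (k + 1) i ≤ S.mu * S.eps k i := S.heps_dec k i
      _ ≤ S.mu * (S.mu ^ k * S.eps 0 i) := mul_le_mul_of_nonneg_left ih S.hmu0.le
      _ = S.mu ^ (k + 1) * S.eps 0 i := by ring

theorem tendsto_eps (i : Fin n) : Tendsto (fun k => S.eps k i) atTop (𝓝 0) := by
  refine squeeze_zero (fun k => (S.heps_pos k i).le) (S.eps_le_pow · i) ?_
  simpa using (tendsto_pow_atTop_nhds_zero_of_lt_one S.hmu0.le S.hmu1).mul_const (S.eps 0 i)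

end IRL1

theorem stmt10_general {n : ℕ} (S : IRL1 n)
    (C : ℝ) (hC : 0 < C)
    (hCb : ∀ (k : ℕ) (j : Fin n), |gradient (S.Q k) (S.x (k + 1)) j| ≤ C)
    (Istar : Set (Fin n))
    (hI : ∃ K : ℕ, ∀ k > K, {i : Fin n | S.x k i ≠ 0} = Istar)
    (xstar : EuclideanSpace ℝ (Fin n))
    (hcluster : ∃ φ : ℕ → ℕ, StrictMono φ ∧
      Tendsto (fun k => S.x (φ k)) atTop (nhds xstar)) :
    {i : Fin n | xstar i ≠ 0} = Istar ∧
    ∀ i ∈ Istar, (C / (S.p * S.lam)) ^ (1 / (S.p - 1)) ≤ |xstar i| := by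
  obtain ⟨K, hK⟩ := hI
  have hsupp : ∀ k > K, ∀ i, S.x k i ≠ 0 ↔ i ∈ Istar := fun k hk => Set.ext_iff.mp (hK k hk)
  obtain ⟨φ, hφ, hlim⟩ := hcluster
  have hcoord : ∀ i, Tendsto (fun m => S.x (φ m) i) atTop (𝓝 (xstar i)) := fun i =>
    ((EuclideanSpace.proj i).continuous.tendsto xstar).comp hlim
  have hφK : ∀ᶠ m in atTop, K < φ m := hφ.tendsto_atTop.eventually_gt_atTop K
  have hzero : ∀ i ∉ Istar, xstar i = 0 := fun i hi =>
    tendsto_nhds_unique (hcoord i) <| tendsto_const_nhds.congr' <| hφK.mono fun m hm =>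
      (not_ne_iff.mp ((hsupp (φ m) hm i).not.mpr hi)).symm
  have hbound : ∀ i ∈ Istar, (C / (S.p * S.lam)) ^ (1 / (S.p - 1)) ≤ |xstar i| := by
    intro i hi
    have hlim_i := ((continuous_abs.tendsto _).comp (hcoord i)).add
      ((S.tendsto_eps i).comp hφ.tendsto_atTop)
    rw [add_zero] at hlim_i
    exact ge_of_tendsto hlim_i <| hφK.mono fun m hm =>
      S.rpow_le_abs_add_eps (hCb _ i) ((hsupp (φ m + 1) (by omega) i).mpr hi)
  refine ⟨Set.ext fun i => ⟨fun h => by_contra (h ∘ hzero i), fun hi => ?_⟩, hbound⟩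
  have hc : 0 < (C / (S.p * S.lam)) ^ (1 / (S.p - 1)) := by
    have := S.hp0; have := S.hlam; positivity
  exact abs_pos.mp (hc.trans_le (hbound i hi))

/-- In the IRL1 setting with bounded level set, let `C > 0` bound
`‖∇Q_k(x^{k+1})‖_∞` for all `k`, and let `I*` be the eventual support of the
iterates. Then every cluster point `x*` of `{x^k}` satisfies
`{i : x*_i ≠ 0} = I*` and `|x*_i| ≥ (C/(pλ))^(1/(p-1))` for every `i ∈ I*`. -/
theorem stmt10 {n : ℕ} (S : IRL1 n) (hbdd : S.LevelBounded)
    (C : ℝ) (hC : 0 < C)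
    (hCb : ∀ (k : ℕ) (j : Fin n), |gradient (S.Q k) (S.x (k + 1)) j| ≤ C)
    (Istar : Set (Fin n))
    (hI : ∃ K : ℕ, ∀ k > K, {i : Fin n | S.x k i ≠ 0} = Istar)
    (xstar : EuclideanSpace ℝ (Fin n))
    (hcluster : ∃ φ : ℕ → ℕ, StrictMono φ ∧
      Tendsto (fun k => S.x (φ k)) atTop (nhds xstar)) :
    {i : Fin n | xstar i ≠ 0} = Istar ∧
    ∀ i ∈ Istar, (C / (S.p * S.lam)) ^ (1 / (S.p - 1)) ≤ |xstar i| :=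
  stmt10_general S C hC hCb Istar hI xstar hcluster
end
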